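/- arXiv:1906.10355 — 4 statements merged into one kernel-verified Lean document; each statement's English description precedes it below -/
import Mathlib

section
/- The number of proper k-trees (plane trees with exactly k labelled leaves, whose root has outdegree 1 and all other internal vertices have outdegree 2) equals 2^{k-1} · ∏_{i=1}^{k-1} (2i-1). -/
/-- Plane binary trees with leaves labelled by `Fin k`.  A proper `k`-tree is such a
tree planted below an extra root of outdegree 1 (which does not affect the count),
whose `k` leaves carry the labels `1, …, k` bijectively. -/
inductive PTree (k : ℕ) : Type
  | leaf : Fin k → PTree k
  | node : PTree k → PTree k → PTree k

namespace PTree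

/-- The list of leaf labels, from left to right. -/
def labels {k : ℕ} : PTree k → List (Fin k)
  | .leaf i => [i]
  | .node l r => l.labels ++ r.labels

/-- A proper `k`-tree: every label in `Fin k` occurs exactly once among the leaves. -/
def IsProper {k : ℕ} (t : PTree k) : Prop := t.labels.Nodup ∧ t.labels.length = k

end PTree

/-!
A proper `k`-tree is the same thing as an unlabelled binary tree with `k` leaves, of which
there are `catalan (k - 1)`, together with the left-to-right word of its leaf labels, which is
an arbitrary arrangement of `1, …, k`, giving `k !` choices. Finally
`catalan n * (n + 1)! = (2n)! / n! = 2 ^ n * (2n - 1)‼`.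
-/

open Finset Nat

namespace PTree

variable {k : ℕ}

def shape : PTree k → BinaryTree Unit
  | .leaf _ => .nil
  | .node l r => .node () l.shape r.shape

theorem numLeaves_shape (t : PTree k) : t.shape.numLeaves = t.labels.length := by
  induction t with
  | leaf i => rfl
  | node l r hl hr => simp [shape, labels, BinaryTree.numLeaves, hl, hr]

/-- The label `d` is a junk value, used only when the list is too short. -/
def ofShape (d : Fin k) : BinaryTree Unit → List (Fin k) → PTree k
  | .nil, l => .leaf (l.getD 0 d)
  | .node _ a b, l => .node (ofShape d a (l.take a.numLeaves)) (ofShape d b (l.drop a.numLeaves))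

theorem shape_ofShape_and_labels_ofShape (d : Fin k) (s : BinaryTree Unit) (l : List (Fin k))
    (h : l.length = s.numLeaves) : (ofShape d s l).shape = s ∧ (ofShape d s l).labels = l := by
  induction s generalizing l with
  | nil =>
    obtain ⟨x, rfl⟩ := List.length_eq_one_iff.mp h
    exact ⟨rfl, rfl⟩
  | node _ a b ha hb =>
    simp only [BinaryTree.numLeaves] at h
    obtain ⟨ha_shape, ha_labels⟩ := ha (l.take a.numLeaves) (by simp; omega)
    obtain ⟨hb_shape, hb_labels⟩ := hb (l.drop a.numLeaves) (by simp; omega)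
    simp [ofShape, shape, labels, ha_shape, ha_labels, hb_shape, hb_labels]

theorem ofShape_shape_labels (d : Fin k) (t : PTree k) : ofShape d t.shape t.labels = t := by
  induction t with
  | leaf i => rfl
  | node l r hl hr =>
    simp only [shape, labels, ofShape, numLeaves_shape, List.take_left, List.drop_left, hl, hr]

def equivShapeProdLabels (d : Fin k) (m : ℕ) (p : List (Fin k) → Prop) :
    {t : PTree k // p t.labels ∧ t.labels.length = m} ≃
      {s : BinaryTree Unit // s.numLeaves = m} × {l : List (Fin k) // p l ∧ l.length = m} where
  toFun t := (⟨t.1.shape, (numLeaves_shape t.1).trans t.2.2⟩, ⟨t.1.labels, t.2⟩)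
  invFun sl := ⟨ofShape d sl.1.1 sl.2.1, by
    rw [(shape_ofShape_and_labels_ofShape d _ _ (sl.2.2.2.trans sl.1.2.symm)).2]
    exact sl.2.2⟩
  left_inv t := Subtype.ext (ofShape_shape_labels d t.1)
  right_inv sl := by
    obtain ⟨hs, hl⟩ := shape_ofShape_and_labels_ofShape d _ _ (sl.2.2.2.trans sl.1.2.symm)
    exact Prod.ext (Subtype.ext hs) (Subtype.ext hl)

end PTree

theorem BinaryTree.card_numLeaves_eq_succ (n : ℕ) :
    Nat.card {s : BinaryTree Unit // s.numLeaves = n + 1} = catalan n := by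
  have h : ∀ s : BinaryTree Unit, s.numLeaves = n + 1 ↔ s ∈ treesOfNumNodesEq n := by
    simp [numLeaves_eq_numNodes_succ]
  rw [Nat.card_congr (Equiv.subtypeEquivRight h), Nat.card_eq_fintype_card, Fintype.card_coe,
    treesOfNumNodesEq_card_eq_catalan]

def List.nodupEquivEmbedding (α : Type*) (n : ℕ) :
    {l : List α // l.Nodup ∧ l.length = n} ≃ (Fin n ↪ α) where
  toFun l := ⟨fun i => l.1.get (i.cast l.2.2.symm),
    (List.nodup_iff_injective_get.mp l.2.1).comp (Fin.cast_injective _)⟩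
  invFun f := ⟨List.ofFn f, List.nodup_ofFn.mpr f.injective, List.length_ofFn⟩
  left_inv l := by
    obtain ⟨l, -, rfl⟩ := l
    exact Subtype.ext (List.ofFn_get l)
  right_inv f := by
    ext i
    simp

theorem List.card_nodup_fin_length_eq (n : ℕ) :
    Nat.card {l : List (Fin n) // l.Nodup ∧ l.length = n} = n ! := by
  rw [Nat.card_congr (List.nodupEquivEmbedding (Fin n) n), Nat.card_eq_fintype_card,
    Fintype.card_embedding_eq, Fintype.card_fin, Nat.descFactorial_self]

theorem two_pow_mul_prod_odd_mul_factorial (n : ℕ) :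
    2 ^ n * (∏ i ∈ range n, (2 * i + 1)) * n ! = (2 * n)! := by
  induction n with
  | zero => rfl
  | succ n ih =>
    rw [prod_range_succ, pow_succ, factorial_succ, show 2 * (n + 1) = 2 * n + 1 + 1 by ring,
      factorial_succ, factorial_succ, ← ih]
    ring

theorem catalan_mul_factorial_succ (n : ℕ) :
    catalan n * (n + 1)! = 2 ^ n * ∏ i ∈ range n, (2 * i + 1) := by
  apply Nat.eq_of_mul_eq_mul_right (factorial_pos n)
  rw [two_pow_mul_prod_odd_mul_factorial,
    ← choose_mul_factorial_mul_factorial (by omega : n ≤ 2 * n), show 2 * n - n = n by omega,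
    ← centralBinom_eq_two_mul_choose, ← succ_mul_catalan_eq_centralBinom, factorial_succ]
  ring

/-- The number of proper `k`-trees equals `2^(k-1) · ∏_{i=1}^{k-1} (2i-1)`. -/
theorem count_proper_k_trees (k : ℕ) (hk : 1 ≤ k) :
    Nat.card {t : PTree k // t.IsProper} =
      2 ^ (k - 1) * ∏ i ∈ Finset.range (k - 1), (2 * i + 1) := by
  obtain ⟨n, rfl⟩ : ∃ n, k = n + 1 := ⟨k - 1, by omega⟩
  unfold PTree.IsProper
  rw [Nat.card_congr (PTree.equivShapeProdLabels 0 (n + 1) List.Nodup), Nat.card_prod,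
    BinaryTree.card_numLeaves_eq_succ, List.card_nodup_fin_length_eq]
  exact catalan_mul_factorial_succ n
end

section
/- The function h(x) = (∏_{i=1}^{k-1}(2i-1)) · (∑_{i=1}^{2k-1} x_i) · exp(-(∑_{i=1}^{2k-1} x_i)²/2) on ℝ_{>0}^{2k-1} is a probability density: its integral over ℝ_{>0}^{2k-1} equals 1. -/
/-!
The integrand depends on `x` only through `t = ∑ xᵢ`, and for any nonnegative `f`,
`∫_{ℝ₊ⁿ} f (∑ xᵢ) dx = ∫₀^∞ tⁿ⁻¹ / (n-1)! · f t dt` (induction on `n`: integrate out one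
coordinate, then swap the order of integration over the triangle `0 < t < u`).
With `n = 2k - 1` and `f t = t e^{-t²/2}` the right side is the Gaussian moment
`∫₀^∞ t^{2k-1} e^{-t²/2} dt = 2^{k-1} (k-1)!` divided by `(2k-2)!`, and
`(2k-2)! = 1 · 3 ⋯ (2k-3) · 2^{k-1} (k-1)!`.
-/

open MeasureTheory Real Set
open scoped ENNReal Nat

theorem lintegral_pi_eq_lintegral_lintegral_cons {α : Type*} [MeasurableSpace α]
    (μ : Measure α) [SigmaFinite μ] {n : ℕ} {G : (Fin (n + 1) → α) → ℝ≥0∞} (hG : Measurable G) :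
    ∫⁻ x, G x ∂Measure.pi (fun _ ↦ μ) =
      ∫⁻ s, ∫⁻ y, G (Fin.cons s y) ∂Measure.pi (fun _ ↦ μ) ∂μ := by
  set e := (MeasurableEquiv.piFinSuccAbove (fun _ ↦ α) 0).symm
  rw [← (measurePreserving_piFinSuccAbove (fun _ ↦ μ) 0).symm.lintegral_comp hG,
    lintegral_prod (fun a ↦ G (e a)) (hG.comp e.measurable).aemeasurable]
  simp [e, MeasurableEquiv.piFinSuccAbove_symm_apply, Fin.insertNthEquiv]

theorem setLIntegral_Ioi_zero_comp_add_right (F : ℝ → ℝ≥0∞) (t : ℝ) :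
    ∫⁻ s in Ioi 0, F (s + t) = ∫⁻ u in Ioi t, F u := by
  simpa using (measurePreserving_add_right volume t).setLIntegral_comp_preimage_emb
    (measurableEmbedding_addRight t) F (Ioi t)

theorem setLIntegral_Ioi_setLIntegral_Ioi_mul_comp_add {f g : ℝ → ℝ≥0∞} (hf : Measurable f)
    (hg : Measurable g) :
    ∫⁻ s in Ioi 0, ∫⁻ t in Ioi 0, g t * f (s + t) =
      ∫⁻ u in Ioi 0, (∫⁻ t in Ioo 0 u, g t) * f u := by
  have hT : Measurable fun p : ℝ × ℝ ↦ if p.1 < p.2 then g p.1 * f p.2 else 0 :=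
    Measurable.ite (measurableSet_lt measurable_fst measurable_snd) (by fun_prop) measurable_const
  calc ∫⁻ s in Ioi 0, ∫⁻ t in Ioi 0, g t * f (s + t)
      = ∫⁻ t in Ioi 0, ∫⁻ s in Ioi 0, g t * f (s + t) :=
        lintegral_lintegral_swap (by fun_prop)
    _ = ∫⁻ t in Ioi 0, ∫⁻ u in Ioi 0, if t < u then g t * f u else 0 := by
        refine setLIntegral_congr_fun measurableSet_Ioi fun t ht ↦ ?_
        rw [setLIntegral_Ioi_zero_comp_add_right (fun u ↦ g t * f u) t,
          ← inter_eq_left.2 (Ioi_subset_Ioi ht.out.le), ← setLIntegral_indicator measurableSet_Ioi]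
        simp only [indicator_apply, mem_Ioi]
    _ = ∫⁻ u in Ioi 0, ∫⁻ t in Ioi 0, if t < u then g t * f u else 0 :=
        lintegral_lintegral_swap hT.aemeasurable
    _ = ∫⁻ u in Ioi 0, (∫⁻ t in Ioo 0 u, g t) * f u := by
        refine lintegral_congr fun u ↦ ?_
        rw [← lintegral_mul_const _ hg, ← Ioi_inter_Iio, inter_comm,
          ← setLIntegral_indicator measurableSet_Iio]
        simp only [indicator_apply, mem_Iio]

theorem lintegral_Ioo_pow_div_factorial (n : ℕ) {u : ℝ} (hu : 0 ≤ u) :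
    ∫⁻ t in Ioo 0 u, ENNReal.ofReal (t ^ n / n !) = ENNReal.ofReal (u ^ (n + 1) / (n + 1)!) := by
  have hint : IntegrableOn (fun t : ℝ ↦ t ^ n / n !) (Ioo 0 u) :=
    (by fun_prop : Continuous fun t : ℝ ↦ t ^ n / n !).integrableOn_Icc.mono_set Ioo_subset_Icc_self
  rw [← ofReal_integral_eq_lintegral_ofReal hint, ← integral_Ioc_eq_integral_Ioo,
    ← intervalIntegral.integral_of_le hu, intervalIntegral.integral_div, integral_pow,
    Nat.factorial_succ]
  · push_cast
    field_simp
    simp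
  · filter_upwards [ae_restrict_mem measurableSet_Ioo] with t ht
    exact div_nonneg (pow_nonneg ht.1.le n) (by positivity)

theorem lintegral_pi_Ioi_comp_sum (n : ℕ) {f : ℝ → ℝ≥0∞} (hf : Measurable f) :
    ∫⁻ x, f (∑ i, x i) ∂Measure.pi (fun _ : Fin (n + 1) ↦ volume.restrict (Ioi 0)) =
      ∫⁻ t in Ioi 0, ENNReal.ofReal (t ^ n / n !) * f t := by
  induction n generalizing f with
  | zero =>
    rw [lintegral_pi_eq_lintegral_lintegral_cons _ (by fun_prop)]
    simp
  | succ n ih =>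
    rw [lintegral_pi_eq_lintegral_lintegral_cons _ (by fun_prop)]
    simp only [Fin.sum_cons, fun s ↦ ih (f := fun u ↦ f (s + u)) (by fun_prop)]
    rw [setLIntegral_Ioi_setLIntegral_Ioi_mul_comp_add hf (by fun_prop)]
    refine setLIntegral_congr_fun measurableSet_Ioi fun u hu ↦ ?_
    rw [lintegral_Ioo_pow_div_factorial n hu.out.le]

theorem setIntegral_univ_pi_Ioi_comp_sum (n : ℕ) {g : ℝ → ℝ} (hg : Measurable g)
    (hg_nonneg : ∀ t, 0 < t → 0 ≤ g t) :
    ∫ x in univ.pi fun _ : Fin (n + 1) ↦ Ioi 0, g (∑ i, x i) =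
      ∫ t in Ioi 0, t ^ n / n ! * g t := by
  have hsum_pos : ∀ x ∈ univ.pi fun _ : Fin (n + 1) ↦ Ioi (0 : ℝ), 0 < ∑ i, x i :=
    fun x hx ↦ Finset.sum_pos (fun i _ ↦ hx i (mem_univ i)) Finset.univ_nonempty
  -- both sides are `toReal` of nonnegative lintegrals, so no integrability is needed
  rw [integral_eq_lintegral_of_nonneg_ae, integral_eq_lintegral_of_nonneg_ae, volume_pi,
    Measure.restrict_pi_pi, lintegral_pi_Ioi_comp_sum n hg.ennreal_ofReal]
  · congr 1
    refine setLIntegral_congr_fun measurableSet_Ioi fun t ht ↦ ?_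
    exact (ENNReal.ofReal_mul (by have := ht.out; positivity)).symm
  · filter_upwards [ae_restrict_mem measurableSet_Ioi] with t ht
    exact mul_nonneg (by have := ht.out; positivity) (hg_nonneg t ht)
  · fun_prop
  · filter_upwards [ae_restrict_mem (MeasurableSet.univ_pi fun _ ↦ measurableSet_Ioi)] with x hx
    exact hg_nonneg _ (hsum_pos x hx)
  · exact (hg.comp (by fun_prop)).aestronglyMeasurable

theorem integral_Ioi_pow_mul_exp_neg_sq_div_two (m : ℕ) :
    ∫ t in Ioi (0 : ℝ), t ^ (2 * m + 1) * exp (-t ^ 2 / 2) = 2 ^ m * m ! := by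
  have h := integral_rpow_mul_exp_neg_mul_rpow (p := 2) (q := 2 * m + 1) (b := 1 / 2)
    two_pos (by linarith [m.cast_nonneg (α := ℝ)]) (by norm_num)
  have hΓ : ((2 * m + 1 : ℝ) + 1) / 2 = (m : ℝ) + 1 := by ring
  have hb : (1 / 2 : ℝ) ^ (-((2 * m + 1 : ℝ) + 1) / 2) = 2 ^ (m + 1) := by
    rw [one_div, inv_rpow zero_le_two, ← rpow_neg zero_le_two,
      show -(-((2 * m + 1 : ℝ) + 1) / 2) = (m + 1 : ℕ) by push_cast; ring, rpow_natCast]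
  rw [hΓ, Gamma_nat_eq_factorial, hb, show (2 * m + 1 : ℝ) = (2 * m + 1 : ℕ) by push_cast; ring]
    at h
  simp only [rpow_natCast, rpow_two, neg_mul, one_div, ← div_eq_inv_mul, ← neg_div] at h
  rw [h, pow_succ]
  ring

theorem prod_range_two_mul_add_one_mul_two_pow_mul_factorial (m : ℕ) :
    (∏ i ∈ Finset.range m, (2 * (i : ℝ) + 1)) * (2 ^ m * m !) = (2 * m)! := by
  induction m with
  | zero => simp
  | succ m ih =>
    rw [Finset.prod_range_succ, pow_succ, Nat.factorial_succ,
      show 2 * (m + 1) = 2 * m + 1 + 1 by ring, Nat.factorial_succ, Nat.factorial_succ]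
    push_cast at ih ⊢
    linear_combination (2 * (m : ℝ) + 1) * 2 * ((m : ℝ) + 1) * ih

/-- The function `h(x) = (∏_{i=1}^{k-1}(2i-1)) (∑ x_i) exp(-(∑ x_i)²/2)` is a
probability density on `ℝ_{>0}^{2k-1}`. -/
theorem h_is_probability_density (k : ℕ) (hk : 1 ≤ k) :
    ∫ x in Set.univ.pi fun _ : Fin (2 * k - 1) => Set.Ioi (0 : ℝ),
      (∏ i ∈ Finset.range (k - 1), (2 * (i : ℝ) + 1)) * (∑ i, x i) *
        Real.exp (-(∑ i, x i) ^ 2 / 2) = 1 := by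
  obtain ⟨m, rfl⟩ : ∃ m, k = m + 1 := ⟨k - 1, by omega⟩
  rw [show 2 * (m + 1) - 1 = 2 * m + 1 by omega, Nat.add_sub_cancel]
  simp_rw [mul_assoc]
  rw [integral_const_mul, setIntegral_univ_pi_Ioi_comp_sum (2 * m)
    (g := fun s ↦ s * exp (-s ^ 2 / 2)) (by fun_prop) (fun t ht ↦ by positivity)]
  have hmoment : ∫ t in Ioi (0 : ℝ), t ^ (2 * m) / (2 * m)! * (t * exp (-t ^ 2 / 2)) =
      2 ^ m * m ! / (2 * m)! := by
    rw [← integral_Ioi_pow_mul_exp_neg_sq_div_two, ← integral_div]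
    congr 1 with t
    ring
  rw [hmoment, mul_div_assoc', prod_range_two_mul_add_one_mul_two_pow_mul_factorial,
    div_self (by positivity)]
end

section
/- For n ≥ 2, the number of unlabelled cographs on n vertices equals twice the number of unlabelled unordered rooted trees with n leaves in which every internal vertex has outdegree at least 2. -/
/-! Unlabelled unordered rooted trees with all internal outdegrees ≥ 2,
counted by leaves, versus unlabelled cographs, counted by vertices. -/

/-- Plane rooted trees (`node []` is a leaf). -/
inductive PT : Type
  | node : List PT → PT

namespace PT

/-- Number of leaves. -/
def leafCount : PT → ℕ
  | .node l => max 1 ((l.attach.map fun x => leafCount x.1).sum)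
  decreasing_by
    cases x with | mk a h => have := List.sizeOf_lt_of_mem h; simp; omega

/-- Every internal vertex has outdegree at least 2. -/
inductive Good : PT → Prop
  | node (l : List PT) : (l = [] ∨ 2 ≤ l.length) → (∀ t ∈ l, Good t) → Good (.node l)

/-- Two plane trees represent the same unordered rooted tree. -/
inductive Equiv : PT → PT → Prop
  | mk {l l' l'' : List PT} : List.Forall₂ Equiv l l'' → l''.Perm l' → Equiv (.node l) (.node l')

end PT

/-- The number of unlabelled unordered rooted trees with `n` leaves in which every
internal vertex has outdegree at least 2. -/
noncomputable def treeCount (n : ℕ) : ℕ :=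
  Nat.card (Quot fun s t : {t : PT // t.Good ∧ t.leafCount = n} => PT.Equiv s.1 t.1)

/-- Disjoint union of two simple graphs on `Fin m` and `Fin n`. -/
def disjUnionGraph {m n : ℕ} (G : SimpleGraph (Fin m)) (H : SimpleGraph (Fin n)) :
    SimpleGraph (Fin (m + n)) :=
  SimpleGraph.comap (finSumFinEquiv.symm)
    (G.map (Function.Embedding.inl) ⊔ H.map (Function.Embedding.inr))

/-- Cographs: the smallest class of graphs containing the one-vertex graph and closed
under complementation and disjoint union. -/
inductive IsCograph : ∀ {n : ℕ}, SimpleGraph (Fin n) → Prop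
  | single : IsCograph (⊥ : SimpleGraph (Fin 1))
  | compl {n : ℕ} {G : SimpleGraph (Fin n)} : IsCograph G → IsCograph Gᶜ
  | union {m n : ℕ} {G : SimpleGraph (Fin m)} {H : SimpleGraph (Fin n)} :
      IsCograph G → IsCograph H → IsCograph (disjUnionGraph G H)

/-- The number of unlabelled cographs on `n` vertices. -/
noncomputable def cographCount (n : ℕ) : ℕ :=
  Nat.card (Quot fun G H : {G : SimpleGraph (Fin n) // IsCograph G} => Nonempty (G.1 ≃g H.1))

/-!
A cotree is a tree as in `treeCount` together with the sign of its root, the other signs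
alternating. The cograph of a cotree with root `⊕` is the disjoint union of the complements of the
cographs of its children, and flipping the root sign complements the graph, so every cograph is
the graph of a signed good tree and equivalent trees give isomorphic graphs. Conversely, for a good
tree with root `⊕` the complemented graphs of the children are connected, hence are the connected
components; an isomorphism of graphs matches them up, and by induction the trees are equivalent.
With at least two vertices the graph is disconnected for the root `⊕` and connected for `⊖`, so
the sign is recovered as well: (sign, tree) ↦ cograph is a bijection on isomorphism classes.
-/

namespace SimpleGraph

variable {V V' W W' : Type*} {G : SimpleGraph V} {G' : SimpleGraph V'}
  {H : SimpleGraph W} {H' : SimpleGraph W'}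

def Iso.compl (e : G ≃g G') : Gᶜ ≃g G'ᶜ :=
  ⟨e.toEquiv, by simp [compl_adj, e.map_adj_iff]⟩

lemma Reachable.isLeft_eq_of_sum {u v : V ⊕ W} (h : (G ⊕g H).Reachable u v) :
    u.isLeft = v.isLeft := by
  rcases u with a | b <;> rcases v with a' | b'
  · rfl
  · exact absurd h (not_reachable_sum_inl_inr a b')
  · exact absurd h.symm (not_reachable_sum_inl_inr a' b)
  · rfl

lemma connected_compl_sum [Nonempty V] [Nonempty W] : (G ⊕g H)ᶜ.Connected :=
  (G ⊕g H).connected_or_connected_compl.resolve_left not_connected_sum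

def Iso.induceIsLeft : (G ⊕g H).induce {x | x.isLeft} ≃g G :=
  ⟨Equiv.sumIsLeft, by rintro ⟨_ | _, ⟨⟩⟩ ⟨_ | _, ⟨⟩⟩; rfl⟩

def Iso.induceIsRight : (G ⊕g H).induce {x | x.isRight} ≃g H :=
  ⟨Equiv.sumIsRight, by rintro ⟨_ | _, ⟨⟩⟩ ⟨_ | _, ⟨⟩⟩; rfl⟩

lemma Iso.isLeft_apply_inl (hG : G.Preconnected) (e : G ⊕g H ≃g G' ⊕g H') {x : V}
    (hx : (e (.inl x)).isLeft) (z : V) : (e (.inl z)).isLeft := by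
  have h : (G' ⊕g H').Reachable (e (.inl x)) (e (.inl z)) :=
    ((hG x z).map Embedding.sumInl.toHom).map e.toHom
  exact h.isLeft_eq_of_sum ▸ hx

lemma Iso.nonempty_iso_of_sum (hG : G.Preconnected) (hG' : G'.Preconnected)
    (e : G ⊕g H ≃g G' ⊕g H') {x : V} (hx : (e (.inl x)).isLeft) :
    Nonempty (G ≃g G') ∧ Nonempty (H ≃g H') := by
  obtain ⟨y, hy⟩ := Sum.isLeft_iff.mp hx
  have hy' : (e.symm (.inl y)).isLeft := by simp [← hy]
  have hside : ∀ u, (e u).isLeft = u.isLeft := by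
    rintro (z | w)
    · exact e.isLeft_apply_inl hG hx z
    · cases hw : e (.inr w) with
      | inr => rfl
      | inl y' =>
        have := e.symm.isLeft_apply_inl hG' hy' y'
        rw [← hw, e.symm_apply_apply] at this
        simp at this
  have hL : Set.BijOn e {u | u.isLeft} {u | u.isLeft} :=
    e.toEquiv.bijOn fun u => by rw [Set.mem_ofPred_eq, Set.mem_ofPred_eq, ← hside u]; rfl
  have hR : Set.BijOn e {u | u.isRight} {u | u.isRight} := e.toEquiv.bijOn fun u => by
    rw [Set.mem_ofPred_eq, Set.mem_ofPred_eq, ← Sum.bnot_isLeft, ← Sum.bnot_isLeft, ← hside u]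
    rfl
  exact ⟨⟨induceIsLeft.symm.trans ((e.induce hL).trans induceIsLeft)⟩,
    ⟨induceIsRight.symm.trans ((e.induce hR).trans induceIsRight)⟩⟩

def Iso.sumLeftComm {U : Type*} {I : SimpleGraph U} : G ⊕g (H ⊕g I) ≃g H ⊕g (G ⊕g I) :=
  Iso.sumAssoc.symm.trans ((Iso.sumComm.sumCongr .refl).trans Iso.sumAssoc)

def Iso.sumDisjUnionGraph {m n : ℕ} (G : SimpleGraph (Fin m)) (H : SimpleGraph (Fin n)) :
    G ⊕g H ≃g disjUnionGraph G H :=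
  ⟨finSumFinEquiv, by rintro (a | a) (b | b) <;> simp [disjUnionGraph]⟩

end SimpleGraph

abbrev BundledGraph : Type 1 := Σ V : Type, SimpleGraph V

namespace BundledGraph

open SimpleGraph

abbrev compl (G : BundledGraph) : BundledGraph := ⟨G.1, G.2ᶜ⟩

abbrev sum (G H : BundledGraph) : BundledGraph := ⟨G.1 ⊕ H.1, G.2 ⊕g H.2⟩

def sumList : List BundledGraph → BundledGraph
  | [] => ⟨Empty, ⊥⟩
  | G :: L => G.sum (sumList L)

def Isomorphic (G H : BundledGraph) : Prop := Nonempty (G.2 ≃g H.2)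

variable {G G' H H' : BundledGraph} {L L' : List BundledGraph}

lemma isomorphic_equivalence : Equivalence Isomorphic :=
  ⟨fun _ => ⟨.refl⟩, fun ⟨e⟩ => ⟨e.symm⟩, fun ⟨e⟩ ⟨f⟩ => ⟨e.trans f⟩⟩

@[refl] lemma Isomorphic.refl (G : BundledGraph) : Isomorphic G G := isomorphic_equivalence.refl G

lemma Isomorphic.symm (h : Isomorphic G H) : Isomorphic H G :=
  isomorphic_equivalence.symm h

lemma Isomorphic.trans {K : BundledGraph} (h : Isomorphic G H) (h' : Isomorphic H K) :
    Isomorphic G K :=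
  isomorphic_equivalence.trans h h'

@[simp] lemma compl_compl (G : BundledGraph) : G.compl.compl = G :=
  congrArg (Sigma.mk G.1) (_root_.compl_compl G.2)

lemma Isomorphic.compl (h : Isomorphic G H) : Isomorphic G.compl H.compl :=
  h.map Iso.compl

lemma Isomorphic.sum (hG : Isomorphic G G') (hH : Isomorphic H H') :
    Isomorphic (G.sum H) (G'.sum H') :=
  hG.elim fun e => hH.map e.sumCongr

lemma sumList_congr (h : L.Forall₂ Isomorphic L') : Isomorphic (sumList L) (sumList L') := by
  induction h with
  | nil => rfl
  | cons hGH _ ih => exact hGH.sum ih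

lemma sumList_perm (h : L.Perm L') : Isomorphic (sumList L) (sumList L') := by
  induction h with
  | nil => rfl
  | cons G _ ih => exact (Isomorphic.refl G).sum ih
  | swap => exact ⟨Iso.sumLeftComm⟩
  | trans _ _ ih ih' => exact ih.trans ih'

lemma sumList_singleton (G : BundledGraph) : Isomorphic (sumList [G]) G :=
  ⟨⟨Equiv.sumEmpty G.1 Empty, by
    rintro (a | a) (b | b) <;> first | rfl | exact isEmptyElim ‹Empty›⟩⟩

lemma sumList_append (L₁ L₂ : List BundledGraph) :
    Isomorphic (sumList (L₁ ++ L₂)) ((sumList L₁).sum (sumList L₂)) := by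
  induction L₁ with
  | nil => exact ⟨⟨(Equiv.emptySum Empty _).symm, by rintro a b; rfl⟩⟩
  | cons G L₁ ih => exact ((Isomorphic.refl G).sum ih).trans ⟨Iso.sumAssoc.symm⟩

lemma card_sumList (L : List BundledGraph) :
    ENat.card (sumList L).1 = (L.map fun G => ENat.card G.1).sum := by
  induction L with
  | nil => simp [sumList]
  | cons G L ih => simp [sumList, sum, ih]

def IsCographic (G : BundledGraph) : Prop :=
  ∃ (n : ℕ) (H : SimpleGraph (Fin n)), IsCograph H ∧ Isomorphic G ⟨Fin n, H⟩

lemma IsCographic.of_isomorphic (hH : H.IsCographic) (h : Isomorphic G H) : G.IsCographic :=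
  let ⟨n, K, hK, e⟩ := hH
  ⟨n, K, hK, h.trans e⟩

lemma IsCographic.compl (hG : G.IsCographic) : G.compl.IsCographic :=
  let ⟨n, K, hK, e⟩ := hG
  ⟨n, Kᶜ, hK.compl, e.compl⟩

lemma IsCographic.sum (hG : G.IsCographic) (hH : H.IsCographic) : (G.sum H).IsCographic :=
  let ⟨_, K, hK, e⟩ := hG
  let ⟨_, K', hK', e'⟩ := hH
  ⟨_, _, hK.union hK', (e.sum e').trans ⟨.sumDisjUnionGraph K K'⟩⟩

lemma isCographic_sumList :
    ∀ {L : List BundledGraph}, L ≠ [] → (∀ G ∈ L, G.IsCographic) → (sumList L).IsCographic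
  | [G], _, h => (h G (by simp)).of_isomorphic (sumList_singleton G)
  | G :: H :: L, _, h =>
    (h G (by simp)).sum (isCographic_sumList (List.cons_ne_nil H L) fun K hK => h K (by simp [hK]))

section Decomposition

variable {α : Type*} (f : α → BundledGraph)

lemma exists_perm_cons_of_vertex :
    ∀ (L : List α) (v : (sumList (L.map f)).1), ∃ b R, (b :: R).Perm L ∧
      ∃ φ : (sumList (L.map f)).2 ≃g ((f b).sum (sumList (R.map f))).2, (φ v).isLeft
  | [], v => v.elim
  | c :: _, .inl _ => ⟨c, _, .refl _, .refl, rfl⟩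
  | c :: L, .inr w => by
    obtain ⟨b, R, hperm, φ, hφ⟩ := exists_perm_cons_of_vertex L w
    obtain ⟨y, hy⟩ := Sum.isLeft_iff.mp hφ
    let ψ : (f c).2 ⊕g (sumList (L.map f)).2 ≃g (f b).2 ⊕g ((f c).2 ⊕g (sumList (R.map f)).2) :=
      (Iso.refl.sumCongr φ).trans Iso.sumLeftComm
    refine ⟨b, c :: R, (List.Perm.swap c b R).trans (hperm.cons c), ψ, ?_⟩
    change (Iso.sumLeftComm (.inr (φ w))).isLeft
    rw [hy]
    rfl

/-- Uniqueness of the decomposition of a graph into connected components. -/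
lemma exists_forall₂_perm_of_isomorphic :
    ∀ {L L' : List α}, (∀ a ∈ L, (f a).2.Connected) → (∀ a ∈ L', (f a).2.Connected) →
      Isomorphic (sumList (L.map f)) (sumList (L'.map f)) →
      ∃ L'', L.Forall₂ (fun a b => Isomorphic (f a) (f b)) L'' ∧ L''.Perm L'
  | [], [], _, _, _ => ⟨[], .nil, .nil⟩
  | [], c :: _, _, hL', ⟨e⟩ =>
    (e.symm (.inl (hL' c (by simp)).nonempty.some) : Empty).elim
  | a :: L, L', hL, hL', ⟨e⟩ => by
    change (f a).2 ⊕g (sumList (L.map f)).2 ≃g _ at e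
    have ha := hL a (by simp)
    obtain ⟨b, R, hperm, φ, hφ⟩ := exists_perm_cons_of_vertex f L' (e (.inl ha.nonempty.some))
    have hb := hL' b (hperm.subset (by simp))
    obtain ⟨hab, hLR⟩ := Iso.nonempty_iso_of_sum ha.preconnected hb.preconnected (e.trans φ) hφ
    obtain ⟨R', hR', hperm'⟩ := exists_forall₂_perm_of_isomorphic
      (fun x hx => hL x (by simp [hx])) (fun x hx => hL' x (hperm.subset (by simp [hx]))) hLR
    exact ⟨b :: R', .cons hab hR', (hperm'.cons b).trans hperm⟩

end Decomposition

end BundledGraph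

lemma List.Forall₂.imp_of_mem {α β : Type*} {R S : α → β → Prop} {l₁ : List α} {l₂ : List β}
    (h : l₁.Forall₂ R l₂) (H : ∀ a ∈ l₁, ∀ b ∈ l₂, R a b → S a b) : l₁.Forall₂ S l₂ := by
  induction h with
  | nil => exact .nil
  | cons hab _ ih =>
    exact .cons (H _ (mem_cons_self ..) _ (mem_cons_self ..) hab)
      (ih fun a ha b hb => H a (mem_cons_of_mem _ ha) b (mem_cons_of_mem _ hb))

namespace PT

open BundledGraph SimpleGraph

@[elab_as_elim]
protected theorem induction {motive : PT → Prop}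
    (node : ∀ l, (∀ t ∈ l, motive t) → motive (.node l)) : ∀ t, motive t
  | .node l => node l fun t _ => PT.induction node t

lemma leafCount_node (l : List PT) : (node l).leafCount = max 1 (l.map leafCount).sum := by
  rw [leafCount, List.attach_map_val]

lemma leafCount_node_nil : (node []).leafCount = 1 := by simp [leafCount_node]

lemma one_le_leafCount (t : PT) : 1 ≤ t.leafCount := by
  cases t; rw [leafCount_node]; exact le_max_left ..

lemma Good.of_mem {l : List PT} {t : PT} (h : (PT.node l).Good) (ht : t ∈ l) : t.Good := by
  cases h with | node _ _ h => exact h t ht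

lemma Good.eq_nil_or_two_le_length {l : List PT} (h : (PT.node l).Good) :
    l = [] ∨ 2 ≤ l.length := by
  cases h with | node _ h _ => exact h

/-- The cograph of the cotree `t` with root `⊕`: a node is the disjoint union of the complements
of its children (their roots carry `⊖`). -/
def graph : PT → BundledGraph
  | .node l => if l = [] then ⟨Unit, ⊥⟩ else sumList (l.map fun c => (graph c).compl)

/-- The cograph of the cotree `t` with root sign `s`, where `false` is `⊕` and `true` is `⊖`. -/
def signedGraph (t : PT) : Bool → BundledGraph
  | false => t.graph
  | true => t.graph.compl

lemma graph_node_nil : (node []).graph = ⟨Unit, ⊥⟩ := by simp [graph]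

lemma graph_node_of_ne_nil {l : List PT} (hl : l ≠ []) :
    (node l).graph = sumList (l.map fun c => c.graph.compl) := by
  rw [graph, if_neg hl]

lemma graph_node_cons (a : PT) (l : List PT) :
    (node (a :: l)).graph = a.graph.compl.sum (sumList (l.map fun c => c.graph.compl)) :=
  graph_node_of_ne_nil (List.cons_ne_nil a l)

lemma signedGraph_not (t : PT) (s : Bool) : t.signedGraph (!s) = (t.signedGraph s).compl := by
  cases s <;> simp [signedGraph]

lemma card_graph (t : PT) : ENat.card t.graph.1 = t.leafCount := by
  induction t using PT.induction with | node l ih =>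
  rcases l with _ | ⟨a, l⟩
  · simp [graph_node_nil, leafCount_node_nil]
  · have hsum : 1 ≤ ((a :: l).map leafCount).sum := by
      simpa using le_add_right (one_le_leafCount a)
    rw [graph_node_of_ne_nil (List.cons_ne_nil a l), card_sumList, leafCount_node,
      max_eq_right hsum, List.map_map, Nat.cast_list_sum, List.map_map]
    exact congrArg List.sum (List.map_congr_left ih)

lemma card_signedGraph (t : PT) (s : Bool) : ENat.card (t.signedGraph s).1 = t.leafCount := by
  cases s <;> exact card_graph t

instance nonempty_graph (t : PT) : Nonempty t.graph.1 := by
  rw [← ENat.card_ne_zero_iff_nonempty, card_graph]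
  exact Nat.cast_ne_zero.mpr (Nat.one_le_iff_ne_zero.mp (one_le_leafCount t))

lemma exists_graph_eq_sum {l : List PT} (hl : 2 ≤ l.length) :
    ∃ (G H : BundledGraph) (_ : Nonempty G.1) (_ : Nonempty H.1), (node l).graph = G.sum H := by
  obtain _ | ⟨a, _ | ⟨b, l⟩⟩ := l
  · simp at hl
  · simp at hl
  · exact ⟨a.graph.compl, sumList ((b :: l).map fun c => c.graph.compl), nonempty_graph a,
      ⟨.inl (nonempty_graph b).some⟩, graph_node_cons a _⟩

lemma not_connected_graph {l : List PT} (hl : 2 ≤ l.length) : ¬ (node l).graph.2.Connected := by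
  obtain ⟨G, H, _, _, h⟩ := exists_graph_eq_sum hl
  rw [h]
  exact not_connected_sum

lemma Good.connected_graph_iff {l : List PT} (h : (PT.node l).Good) :
    (PT.node l).graph.2.Connected ↔ l = [] := by
  refine ⟨fun hc => h.eq_nil_or_two_le_length.resolve_right fun hl => not_connected_graph hl hc,
    ?_⟩
  rintro rfl
  rw [graph_node_nil]
  exact ⟨.of_subsingleton⟩

lemma Good.connected_graph_compl {t : PT} (h : t.Good) : t.graph.compl.2.Connected := by
  obtain ⟨l⟩ := t
  obtain rfl | hl := h.eq_nil_or_two_le_length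
  · rw [graph_node_nil]
    exact ⟨.of_subsingleton⟩
  · obtain ⟨G, H, _, _, h⟩ := exists_graph_eq_sum hl
    rw [h]
    exact connected_compl_sum

lemma isomorphic_graph_node {l l' l'' : List PT}
    (hF : l.Forall₂ (fun a b => Isomorphic a.graph b.graph) l') (hP : l'.Perm l'') :
    Isomorphic (node l).graph (node l'').graph := by
  rcases l with _ | ⟨a, l⟩
  · obtain rfl := List.forall₂_nil_left_iff.mp hF
    rw [List.nil_perm.mp hP]
  · obtain ⟨b, l', -, -, rfl⟩ := List.forall₂_cons_left_iff.mp hF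
    rw [graph_node_of_ne_nil (List.cons_ne_nil a l),
      graph_node_of_ne_nil (List.ne_nil_of_mem (hP.subset (List.mem_cons_self ..)))]
    refine (sumList_congr ?_).trans (sumList_perm (hP.map _))
    exact List.forall₂_map_left_iff.mpr <|
      List.forall₂_map_right_iff.mpr (hF.imp fun _ _ h => h.compl)

theorem Equiv.isomorphic_graph {t u : PT} (h : t.Equiv u) : Isomorphic t.graph u.graph := by
  induction t using PT.induction generalizing u with | node l ih =>
  obtain ⟨hF, hP⟩ := h
  exact isomorphic_graph_node (hF.imp_of_mem fun a ha _ _ hab => ih a ha hab) hP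

theorem Equiv.isomorphic_signedGraph {t u : PT} (h : t.Equiv u) (s : Bool) :
    Isomorphic (t.signedGraph s) (u.signedGraph s) := by
  cases s
  · exact h.isomorphic_graph
  · exact h.isomorphic_graph.compl

/-- The connected components of the graph of a good tree are the complements of the graphs of
its children. -/
theorem equiv_of_isomorphic_graph {t u : PT} (ht : t.Good) (hu : u.Good)
    (h : Isomorphic t.graph u.graph) : t.Equiv u := by
  induction t using PT.induction generalizing u with | node l ih =>
  obtain ⟨l'⟩ := u
  obtain ⟨e⟩ := h
  have hnil : l = [] ↔ l' = [] := by
    rw [← ht.connected_graph_iff, ← hu.connected_graph_iff]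
    exact e.connected_iff
  by_cases hl : l = []
  · subst hl
    rw [hnil.mp rfl]
    exact .mk .nil (.refl [])
  rw [graph_node_of_ne_nil hl, graph_node_of_ne_nil (hnil.not.mp hl)] at e
  obtain ⟨l'', hF, hP⟩ := exists_forall₂_perm_of_isomorphic (fun c => c.graph.compl)
    (fun c hc => (ht.of_mem hc).connected_graph_compl)
    (fun c hc => (hu.of_mem hc).connected_graph_compl) ⟨e⟩
  refine .mk (hF.imp_of_mem fun a ha b hb hab => ?_) hP
  refine ih a ha (ht.of_mem ha) (hu.of_mem (hP.subset hb)) ?_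
  simpa using hab.compl

lemma leafCount_eq_one_of_isomorphic_graph_compl {t u : PT} (ht : t.Good) (hu : u.Good)
    (h : Isomorphic t.graph u.graph.compl) : t.leafCount = 1 := by
  obtain ⟨l⟩ := t
  obtain ⟨e⟩ := h
  obtain rfl | hl := ht.eq_nil_or_two_le_length
  · exact leafCount_node_nil
  · exact absurd (e.connected_iff.mpr hu.connected_graph_compl) (not_connected_graph hl)

/-- With at least two leaves, the graph is disconnected for the root `⊕` and connected for `⊖`. -/
theorem eq_and_equiv_of_isomorphic_signedGraph {t u : PT} (ht : t.Good) (hu : u.Good)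
    (htn : 2 ≤ t.leafCount) (hun : 2 ≤ u.leafCount) {s s' : Bool}
    (h : Isomorphic (t.signedGraph s) (u.signedGraph s')) : s = s' ∧ t.Equiv u := by
  cases s <;> cases s'
  · exact ⟨rfl, equiv_of_isomorphic_graph ht hu h⟩
  · have := leafCount_eq_one_of_isomorphic_graph_compl ht hu h
    omega
  · have := leafCount_eq_one_of_isomorphic_graph_compl hu ht h.symm
    omega
  · exact ⟨rfl, equiv_of_isomorphic_graph ht hu (by simpa [signedGraph] using h.compl)⟩

lemma isomorphic_graph_node_nil : Isomorphic (node []).graph ⟨Fin 1, ⊥⟩ := by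
  rw [graph_node_nil]
  exact ⟨⟨Equiv.ofUnique _ _, by simp⟩⟩

lemma isCographic_graph (t : PT) : t.graph.IsCographic := by
  induction t using PT.induction with | node l ih =>
  by_cases hl : l = []
  · subst hl
    exact ⟨1, ⊥, .single, isomorphic_graph_node_nil⟩
  rw [graph_node_of_ne_nil hl]
  refine isCographic_sumList (by simpa using hl) ?_
  simp only [List.mem_map]
  rintro _ ⟨c, hc, rfl⟩
  exact (ih c hc).compl

lemma isCographic_signedGraph (t : PT) (s : Bool) : (t.signedGraph s).IsCographic := by
  cases s
  · exact isCographic_graph t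
  · exact (isCographic_graph t).compl

/-- The children of a new `⊕` root placed above the cotree `t` with root sign `s`, merging it with
the root of `t` when that is `⊕` too. -/
def summands (t : PT) (s : Bool) : List PT :=
  match t, s with
  | .node (a :: l), false => a :: l
  | _, _ => [t]

lemma summands_ne_nil (t : PT) (s : Bool) : t.summands s ≠ [] := by
  rcases t with ⟨_ | ⟨a, l⟩⟩ <;> cases s <;> simp [summands]

lemma Good.summands {t : PT} (ht : t.Good) (s : Bool) : ∀ c ∈ t.summands s, c.Good := by
  rcases t with ⟨_ | ⟨a, l⟩⟩ <;> cases s <;> simp only [PT.summands, List.mem_singleton] <;>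
    first | (rintro c rfl; exact ht) | exact fun c hc => ht.of_mem hc

lemma isomorphic_sumList_summands (t : PT) (s : Bool) :
    Isomorphic (sumList ((t.summands s).map fun c => c.graph.compl)) (t.signedGraph s) := by
  rcases t with ⟨_ | ⟨a, l⟩⟩ <;> cases s
  · refine (sumList_singleton _).trans ?_
    simp only [signedGraph, graph_node_nil]
    exact ⟨⟨.refl _, by simp⟩⟩
  · exact sumList_singleton _
  · rw [signedGraph, graph_node_cons]
    rfl
  · exact sumList_singleton _

end PT

open BundledGraph in
theorem IsCograph.exists_good_isomorphic_signedGraph {n : ℕ} {G : SimpleGraph (Fin n)}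
    (hG : IsCograph G) :
    ∃ (t : PT) (s : Bool), t.Good ∧ Isomorphic (t.signedGraph s) ⟨Fin n, G⟩ := by
  induction hG with
  | single => exact ⟨.node [], false, .node [] (.inl rfl) (by simp), PT.isomorphic_graph_node_nil⟩
  | compl _ ih =>
    obtain ⟨t, s, ht, h⟩ := ih
    exact ⟨t, !s, ht, by simpa [PT.signedGraph_not] using h.compl⟩
  | @union _ _ G H _ _ ihG ihH =>
    obtain ⟨t, s, ht, hG⟩ := ihG
    obtain ⟨u, s', hu, hH⟩ := ihH
    have hlen : 2 ≤ (t.summands s ++ u.summands s').length := by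
      have := List.length_pos_iff.mpr (t.summands_ne_nil s)
      have := List.length_pos_iff.mpr (u.summands_ne_nil s')
      simp only [List.length_append]
      omega
    refine ⟨.node (t.summands s ++ u.summands s'), false, .node _ (.inr hlen) ?_, ?_⟩
    · simpa [or_imp, forall_and] using ⟨ht.summands s, hu.summands s'⟩
    · rw [PT.signedGraph, PT.graph_node_of_ne_nil (List.ne_nil_of_length_pos (by omega)),
        List.map_append]
      refine (sumList_append _ _).trans (((t.isomorphic_sumList_summands s).trans hG).sum
        ((u.isomorphic_sumList_summands s').trans hH) |>.trans ⟨.sumDisjUnionGraph G H⟩)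

theorem Nat.card_eq_card_quot_of_rel {α β : Type*} {r : β → β → Prop} (hr : Equivalence r)
    (R : α → β → Prop) (hα : ∀ a, ∃ b, R a b) (hβ : ∀ b, ∃ a, R a b)
    (hR : ∀ {a a' b b'}, R a b → R a' b' → (a = a' ↔ r b b')) :
    Nat.card α = Nat.card (Quot r) := by
  choose f hf using hα
  refine Nat.card_eq_of_bijective (Quot.mk r ∘ f) ⟨fun a a' h => ?_, fun q => ?_⟩
  · exact (hR (hf a) (hf a')).mpr (hr.eqvGen_iff.mp (Quot.eqvGen_exact h))
  · induction q using Quot.ind with | mk b =>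
    obtain ⟨a, hab⟩ := hβ b
    exact ⟨a, Quot.sound ((hR (hf a) hab).mp rfl)⟩

section Counting

open BundledGraph

abbrev GoodTree (n : ℕ) : Type := {t : PT // t.Good ∧ t.leafCount = n}

abbrev TreeClass (n : ℕ) : Type := Quot fun s t : GoodTree n => s.1.Equiv t.1

abbrev Cograph (n : ℕ) : Type := {G : SimpleGraph (Fin n) // IsCograph G}

variable {n : ℕ}

/-- `(s, [t])` represents the cograph `G` when `G` is the graph of the cotree `t` with root
sign `s`. -/
def CotreeRepresents (p : Bool × TreeClass n) (G : Cograph n) : Prop :=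
  ∃ t, Quot.mk _ t = p.2 ∧ Isomorphic (t.1.signedGraph p.1) ⟨Fin n, G.1⟩

lemma PT.leafCount_eq_of_isomorphic {t : PT} {s : Bool} {G : SimpleGraph (Fin n)}
    (h : Isomorphic (t.signedGraph s) ⟨Fin n, G⟩) : t.leafCount = n := by
  obtain ⟨e⟩ := h
  have := ENat.card_congr e.toEquiv
  rw [PT.card_signedGraph, ENat.card_eq_coe_fintype_card, Fintype.card_fin] at this
  exact_mod_cast this

lemma exists_cotreeRepresents (p : Bool × TreeClass n) : ∃ G, CotreeRepresents p G := by
  obtain ⟨s, q⟩ := p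
  induction q using Quot.ind with | mk t =>
  obtain ⟨m, G, hG, h⟩ := t.1.isCographic_signedGraph s
  obtain rfl : n = m := t.2.2 ▸ PT.leafCount_eq_of_isomorphic h
  exact ⟨⟨G, hG⟩, t, rfl, h⟩

lemma Cograph.exists_cotreeRepresents (G : Cograph n) : ∃ p, CotreeRepresents p G := by
  obtain ⟨t, s, ht, h⟩ := G.2.exists_good_isomorphic_signedGraph
  exact ⟨(s, Quot.mk _ ⟨t, ht, PT.leafCount_eq_of_isomorphic h⟩), _, rfl, h⟩

lemma CotreeRepresents.eq_iff_nonempty_iso (hn : 2 ≤ n) {s s' : Bool}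
    {q q' : TreeClass n} {G G' : Cograph n}
    (h : CotreeRepresents (s, q) G) (h' : CotreeRepresents (s', q') G') :
    (s, q) = (s', q') ↔ Nonempty (G.1 ≃g G'.1) := by
  obtain ⟨⟨t, ht, htn⟩, rfl, hG⟩ := h
  obtain ⟨⟨t', ht', htn'⟩, rfl, hG'⟩ := h'
  constructor
  · intro hp
    obtain ⟨rfl, htt'⟩ := Prod.ext_iff.mp hp
    have := (Quot.eqvGen_exact htt').mono fun u u' h => h.isomorphic_signedGraph s
    exact hG.symm.trans ((isomorphic_equivalence.comap _).eqvGen_iff.mp this |>.trans hG')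
  · rintro (hGG' : Isomorphic ⟨Fin n, G.1⟩ ⟨Fin n, G'.1⟩)
    obtain ⟨hs, htt'⟩ := PT.eq_and_equiv_of_isomorphic_signedGraph ht ht' (htn ▸ hn)
      (htn' ▸ hn) (hG.trans (hGG'.trans hG'.symm))
    exact Prod.ext hs (Quot.sound htt')

end Counting

/-- For `n ≥ 2`, the number of unlabelled cographs on `n` vertices is twice the number
of unlabelled unordered rooted trees with `n` leaves whose internal vertices all have
outdegree at least 2. -/
theorem cographCount_eq_two_mul_treeCount (n : ℕ) (hn : 2 ≤ n) :
    cographCount n = 2 * treeCount n := by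
  have hiso : Equivalence fun G H : Cograph n => Nonempty (G.1 ≃g H.1) :=
    BundledGraph.isomorphic_equivalence.comap fun G : Cograph n => ⟨Fin n, G.1⟩
  rw [cographCount, ← Nat.card_eq_card_quot_of_rel hiso CotreeRepresents exists_cotreeRepresents
    Cograph.exists_cotreeRepresents (CotreeRepresents.eq_iff_nonempty_iso hn), Nat.card_prod,
    Nat.card_eq_fintype_card (α := Bool), Fintype.card_bool, treeCount]
end

section
/- If the number of leaves Z of a sesqui-type Galton–Watson tree T (blue offspring distribution (ξ,ζ), E[ξ]=1, finite exponential moments) has probability generating function Z(z) = E[z^Z] and f(z,w) = E[z^ξ w^ζ], then Z(z) = P((ξ,ζ)=(0,0))·(z-1) + f(Z(z), z) for all z ∈ [0,1]. -/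
open MeasureTheory ProbabilityTheory

/-- Ulam–Harris genealogy of a sesqui-type Galton–Watson tree: `X v ω` is the pair
(number of blue children, number of red children) of the potential blue vertex `v`;
`Alive X v ω` says that the blue vertex `v` belongs to the tree. -/
def Alive {Ω : Type*} (X : List ℕ → Ω → ℕ × ℕ) : List ℕ → Ω → Prop
  | [], _ => True
  | i :: v, ω => Alive X v ω ∧ i < (X v ω).1

/-- The number of leaves of the tree: blue vertices with no offspring at all,
plus all red vertices (red vertices are infertile, hence leaves). -/
noncomputable def leafCount {Ω : Type*} (X : List ℕ → Ω → ℕ × ℕ) (ω : Ω) : ℕ :=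
  Nat.card {v : List ℕ // Alive X v ω ∧ X v ω = (0, 0)} +
    Nat.card {p : List ℕ × ℕ // Alive X p.1 ω ∧ p.2 < (X p.1 ω).2}

/-!
A finite tree is its root, the `ζ` red children of the root, and the `ξ` subtrees rooted at the
blue children of the root, so `Z = 1{(ξ, ζ) = (0, 0)} + ζ + Z₁ + ⋯ + Z_ξ`. On the canonical space
of offspring configurations `List ℕ → ℕ × ℕ` with the product law, the subtree configurations are
independent of the root and of each other and have the law of the whole configuration, whence
`E[z^Z] = E[z^{1{(ξ, ζ) = (0, 0)}} z^ζ Z(z)^ξ]`, which is the equation.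

The decomposition needs the tree to be finite. If `q n` is the probability that no vertex lies in
generation `n`, the same branching property gives `q (n + 1) = E[(q n)^ξ]`, and `E[ξ] = 1` together
with `s^k ≥ 1 + k (s - 1) + (1 - s)^2` for `k ≥ 2` yields
`q (n + 1) ≥ q n + P(ξ ≥ 2) (1 - q n)^2`, which forces `q n → 1` because `P(ξ ≥ 2) > 0`.
-/

section General

theorem one_le_of_forall_le_of_add_mul_sq_le {q : ℕ → ℝ} {a c : ℝ} (hc : 0 < c) (hq0 : 0 ≤ q 0)
    (hle : ∀ n, q n ≤ a) (hstep : ∀ n, q n + c * (1 - q n) ^ 2 ≤ q (n + 1)) : 1 ≤ a := by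
  by_contra! ha
  have hδ : 0 < c * (1 - a) ^ 2 := mul_pos hc (pow_pos (by linarith) 2)
  have hgrowth : ∀ n : ℕ, n * (c * (1 - a) ^ 2) ≤ q n := by
    intro n
    induction n with
    | zero => simpa using hq0
    | succ n ih =>
      have hgap : c * (1 - a) ^ 2 ≤ c * (1 - q n) ^ 2 :=
        mul_le_mul_of_nonneg_left (pow_le_pow_left₀ (by linarith) (by linarith [hle n]) 2) hc.le
      push_cast
      linarith [hstep n]
  obtain ⟨n, hn⟩ := exists_nat_gt (a / (c * (1 - a) ^ 2))
  rw [div_lt_iff₀ hδ] at hn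
  linarith [hgrowth n, hle n]

theorem one_add_mul_sub_one_add_sq_le_pow {s : ℝ} (hs : 0 ≤ s) {k : ℕ} (hk : 2 ≤ k) :
    1 + k * (s - 1) + (1 - s) ^ 2 ≤ s ^ k := by
  induction k, hk using Nat.le_induction with
  | base => exact le_of_eq (by ring)
  | succ k hk ih =>
    have hk' : (2 : ℝ) ≤ k := by exact_mod_cast hk
    rw [pow_succ s k]
    push_cast
    nlinarith [mul_le_mul_of_nonneg_right ih hs,
      mul_nonneg (sq_nonneg (1 - s)) (by linarith : (0 : ℝ) ≤ k - 1 + s)]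

theorem MeasureTheory.abs_integral_le_one {α : Type*} [MeasurableSpace α] {μ : Measure α}
    [IsProbabilityMeasure μ] {f : α → ℝ} (hf : ∀ x, |f x| ≤ 1) : |∫ x, f x ∂μ| ≤ 1 := by
  simpa using norm_integral_le_of_norm_le_const (μ := μ)
    (Filter.Eventually.of_forall fun x => (Real.norm_eq_abs _).trans_le (hf x))

theorem MeasureTheory.integral_eq_tsum_setIntegral_fiber {Ω α : Type*} [MeasurableSpace Ω]
    [MeasurableSpace α] [Countable α] [MeasurableSingletonClass α] {μ : Measure Ω}
    {Y : Ω → α} (hY : Measurable Y) {f : Ω → ℝ} (hf : Integrable f μ) :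
    ∫ x, f x ∂μ = ∑' a, ∫ x in {x | Y x = a}, f x ∂μ := by
  rw [← integral_iUnion (s := fun a => {x | Y x = a}) (fun a => hY (measurableSet_singleton a))
      (fun a b hab => Set.disjoint_singleton.2 hab |>.preimage Y) hf.integrableOn,
    Set.iUnion_eq_univ_iff.2 fun x => ⟨Y x, rfl⟩, setIntegral_univ]

theorem MeasureTheory.Measure.infinitePi_map_comp_of_injective {ι κ β : Type*}
    [MeasurableSpace β] (ρ : Measure β) [IsProbabilityMeasure ρ] {f : κ → ι}
    (hf : Function.Injective f) :
    (infinitePi fun _ : ι => ρ).map (· ∘ f) = infinitePi fun _ : κ => ρ := by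
  have hcoord := iIndepFun_infinitePi (P := fun _ : ι => ρ) (X := fun _ => id)
    fun _ => measurable_id
  have := (hcoord.precomp hf).map_fun_eq_infinitePi_map fun _ => measurable_pi_apply _
  simp only [infinitePi_map_eval] at this
  exact this

theorem ProbabilityTheory.indep_cylinderEvents_infinitePi {ι : Type*} {E : ι → Type*}
    [∀ i, MeasurableSpace (E i)] (μ : (i : ι) → Measure (E i)) [∀ i, IsProbabilityMeasure (μ i)]
    {S T : Set ι} (hST : Disjoint S T) :
    Indep (cylinderEvents S) (cylinderEvents T) (Measure.infinitePi μ) :=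
  indep_iSup_of_disjoint (fun i => (measurable_pi_apply i).comap_le)
    ((iIndepFun_iff_iIndep _ _ _).1
      (iIndepFun_infinitePi (X := fun _ => id) fun _ => measurable_id)) hST

end General

namespace GaltonWatson

section Tree

variable {Ω Ω' : Type*} {X : List ℕ → Ω → ℕ × ℕ} {ω : Ω}

/-- In the encoding of `Alive`, `i :: v` is a child of `v`; so the subtree rooted at the `i`-th
blue child of the root consists of the vertices `u ++ [i]`. -/
def subtree (X : List ℕ → Ω → ℕ × ℕ) (i : ℕ) : List ℕ → Ω → ℕ × ℕ := fun u => X (u ++ [i])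

def leafWeight (p : ℕ × ℕ) : ℕ := (if p = (0, 0) then 1 else 0) + p.2

theorem alive_congr {X' : List ℕ → Ω' → ℕ × ℕ} {ω' : Ω'} (h : ∀ v, X v ω = X' v ω') :
    ∀ v, Alive X v ω ↔ Alive X' v ω'
  | [] => Iff.rfl
  | i :: v => by simp only [Alive, alive_congr h v, h v]

theorem leafCount_congr {X' : List ℕ → Ω' → ℕ × ℕ} {ω' : Ω'} (h : ∀ v, X v ω = X' v ω') :
    leafCount X ω = leafCount X' ω' := by
  simp only [leafCount, alive_congr h, h]

theorem alive_append_singleton_iff {i : ℕ} :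
    ∀ u, Alive X (u ++ [i]) ω ↔ i < (X [] ω).1 ∧ Alive (subtree X i) u ω
  | [] => by simp [Alive]
  | j :: u => by
    simp only [List.cons_append, Alive, alive_append_singleton_iff u, subtree]
    tauto

theorem setOf_alive_eq (X : List ℕ → Ω → ℕ × ℕ) (ω : Ω) :
    {v | Alive X v ω} =
      insert [] (⋃ i ∈ Set.Iio (X [] ω).1, (· ++ [i]) '' {u | Alive (subtree X i) u ω}) := by
  ext v
  rcases List.eq_nil_or_concat v with rfl | ⟨u, i, rfl⟩
  · simp [Alive]
  · simp [alive_append_singleton_iff, and_comm]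

theorem forall_alive_length_lt_succ_iff {n : ℕ} :
    (∀ v, Alive X v ω → v.length < n + 1) ↔
      ∀ i < (X [] ω).1, ∀ u, Alive (subtree X i) u ω → u.length < n := by
  refine ⟨fun h i hi u hu => ?_, fun h v hv => ?_⟩
  · simpa using h (u ++ [i]) ((alive_append_singleton_iff u).2 ⟨hi, hu⟩)
  · rcases List.eq_nil_or_concat v with rfl | ⟨u, i, rfl⟩
    · simp
    · obtain ⟨hi, hu⟩ := (alive_append_singleton_iff u).1 (by simpa using hv)
      simpa using h i hi u hu

theorem finite_setOf_alive {n : ℕ} (h : ∀ v, Alive X v ω → v.length < n) :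
    {v | Alive X v ω}.Finite := by
  induction n generalizing X with
  | zero => exact absurd (h [] trivial) (Nat.lt_irrefl 0)
  | succ n ih =>
    rw [setOf_alive_eq]
    exact ((Set.finite_Iio _).biUnion fun i hi =>
      (ih (forall_alive_length_lt_succ_iff.1 h i hi)).image _).insert []

theorem finite_setOf_alive_subtree (hfin : {v | Alive X v ω}.Finite) {i : ℕ}
    (hi : i < (X [] ω).1) : {u | Alive (subtree X i) u ω}.Finite :=
  (hfin.preimage (List.append_left_injective [i]).injOn).subset
    fun u hu => (alive_append_singleton_iff u).2 ⟨hi, hu⟩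

theorem finsum_mem_setOf_alive {M : Type*} [AddCommMonoid M] (hfin : {v | Alive X v ω}.Finite)
    (f : List ℕ → M) :
    ∑ᶠ v ∈ {v | Alive X v ω}, f v =
      f [] + ∑ i ∈ Finset.range (X [] ω).1, ∑ᶠ u ∈ {u | Alive (subtree X i) u ω}, f (u ++ [i]) := by
  have hsub : ∀ i ∈ Set.Iio (X [] ω).1, {u | Alive (subtree X i) u ω}.Finite :=
    fun i hi => finite_setOf_alive_subtree hfin hi
  have hdisj : (Set.Iio (X [] ω).1).PairwiseDisjoint
      fun i => (· ++ [i]) '' {u | Alive (subtree X i) u ω} := by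
    intro i _ j _ hij
    refine Set.disjoint_left.2 ?_
    rintro _ ⟨u, -, rfl⟩ ⟨u', -, h⟩
    exact hij (List.append_singleton_inj.1 h).2.symm
  rw [setOf_alive_eq,
    finsum_mem_insert _ (by simp) ((Set.finite_Iio _).biUnion fun i hi => (hsub i hi).image _),
    finsum_mem_biUnion hdisj (Set.finite_Iio _) fun i hi => (hsub i hi).image _,
    ← Finset.coe_range, finsum_mem_coe_finset]
  congr 1
  exact Finset.sum_congr rfl fun i _ => finsum_mem_image (List.append_left_injective [i]).injOn

theorem leafCount_eq_finsum (hfin : {v | Alive X v ω}.Finite) :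
    leafCount X ω = ∑ᶠ v ∈ {v | Alive X v ω}, leafWeight (X v ω) := by
  have hblue : {v | Alive X v ω ∧ X v ω = (0, 0)}.ncard =
      ∑ᶠ v ∈ {v | Alive X v ω}, if X v ω = (0, 0) then 1 else 0 := by
    rw [← finsum_one, finsum_mem_def, finsum_mem_def]
    congr 1 with v
    by_cases hv : Alive X v ω <;> simp [Set.indicator, hv]
  have hred : {p : List ℕ × ℕ | Alive X p.1 ω ∧ p.2 < (X p.1 ω).2}.ncard =
      ∑ᶠ v ∈ {v | Alive X v ω}, (X v ω).2 := by
    have hunion : {p : List ℕ × ℕ | Alive X p.1 ω ∧ p.2 < (X p.1 ω).2} =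
        ⋃ v ∈ {v | Alive X v ω}, {v} ×ˢ Set.Iio (X v ω).2 := by
      ext ⟨v, k⟩
      simp
    rw [hunion, hfin.ncard_biUnion (fun v _ => (Set.finite_singleton v).prod (Set.finite_Iio _))
      fun v _ w _ hvw => Set.disjoint_prod.2 (Or.inl (Set.disjoint_singleton.2 hvw))]
    simp
  change {v | _}.ncard + {p : List ℕ × ℕ | _}.ncard = _
  rw [hblue, hred, ← finsum_mem_add_distrib hfin]
  rfl

theorem leafCount_eq_leafWeight_add_sum (hfin : {v | Alive X v ω}.Finite) :
    leafCount X ω =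
      leafWeight (X [] ω) + ∑ i ∈ Finset.range (X [] ω).1, leafCount (subtree X i) ω := by
  rw [leafCount_eq_finsum hfin, finsum_mem_setOf_alive hfin]
  congr 1
  exact Finset.sum_congr rfl fun i hi =>
    (leafCount_eq_finsum (finite_setOf_alive_subtree hfin (Finset.mem_range.1 hi))).symm

end Tree

section Configuration

def offspring (v : List ℕ) (x : List ℕ → ℕ × ℕ) : ℕ × ℕ := x v

def subtreeConfig (i : ℕ) (x : List ℕ → ℕ × ℕ) : List ℕ → ℕ × ℕ := x ∘ (· ++ [i])

def heightLt (n : ℕ) : Set (List ℕ → ℕ × ℕ) := {x | ∀ v, Alive offspring v x → v.length < n}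

noncomputable abbrev gwMeasure (ρ : Measure (ℕ × ℕ)) : Measure (List ℕ → ℕ × ℕ) :=
  Measure.infinitePi fun _ => ρ

theorem alive_subtree_offspring (i : ℕ) (u : List ℕ) (x : List ℕ → ℕ × ℕ) :
    Alive (subtree offspring i) u x ↔ Alive offspring u (subtreeConfig i x) :=
  alive_congr (X := subtree offspring i) (X' := offspring) (ω' := subtreeConfig i x)
    (fun _ => rfl) u

theorem leafCount_subtree_offspring (i : ℕ) (x : List ℕ → ℕ × ℕ) :
    leafCount (subtree offspring i) x = leafCount offspring (subtreeConfig i x) :=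
  leafCount_congr fun _ => rfl

theorem measurable_alive : ∀ v, Measurable (Alive offspring v)
  | [] => measurable_const
  | i :: v => (measurable_alive v).and
    ((Measurable.of_discrete (f := fun q : ℕ × ℕ => i < q.1)).comp (measurable_pi_apply v))

theorem measurable_leafCount : Measurable (leafCount offspring) := by
  change Measurable fun x => Set.ncard {v | _} + Set.ncard {p : List ℕ × ℕ | _}
  refine (measurable_ncard.comp (measurable_set_iff.2 fun v => ?_)).add
    (measurable_ncard.comp (measurable_set_iff.2 fun p => ?_))
  · exact (measurable_alive v).and ((measurable_pi_apply v).eq_const _)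
  · exact (measurable_alive p.1).and
      ((Measurable.of_discrete (f := fun q : ℕ × ℕ => p.2 < q.2)).comp (measurable_pi_apply p.1))

theorem measurable_pow_leafCount (z : ℝ) : Measurable fun x => z ^ leafCount offspring x :=
  (Measurable.of_discrete (f := fun n : ℕ => z ^ n)).comp measurable_leafCount

theorem measurableSet_heightLt (n : ℕ) : MeasurableSet (heightLt n) :=
  measurableSet_setOfPred.2 <| Measurable.forall fun v => (measurable_alive v).imp measurable_const

theorem indicator_heightLt_succ (n : ℕ) (x : List ℕ → ℕ × ℕ) :
    (heightLt (n + 1)).indicator (1 : (List ℕ → ℕ × ℕ) → ℝ) x =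
      ∏ i ∈ Finset.range (x []).1, (heightLt n).indicator 1 (subtreeConfig i x) := by
  classical
  simp only [Set.indicator_apply, Pi.one_apply]
  rw [Finset.prod_boole]
  refine if_congr ?_ rfl rfl
  simp only [heightLt, Set.mem_ofPred_eq, Finset.mem_range]
  rw [forall_alive_length_lt_succ_iff]
  exact forall₂_congr fun i _ => forall_congr' fun u =>
    imp_congr_left (alive_subtree_offspring i u x)

theorem measurable_subtreeConfig {Δ : Set (List ℕ)} {i : ℕ} (hΔ : ∀ u, u ++ [i] ∈ Δ) :
    Measurable[cylinderEvents Δ] (subtreeConfig i) :=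
  @measurable_pi_lambda _ _ _ (cylinderEvents Δ) _ _ fun u =>
    measurable_cylinderEvent_apply (hΔ u)

theorem measurable_prod_subtreeConfig {Δ : Set (List ℕ)} {G : (List ℕ → ℕ × ℕ) → ℝ}
    (hG : Measurable G) {k : ℕ} (hΔ : ∀ i < k, ∀ u, u ++ [i] ∈ Δ) :
    Measurable[cylinderEvents Δ] fun x => ∏ i ∈ Finset.range k, G (subtreeConfig i x) :=
  Finset.measurable_prod _ fun i hi =>
    hG.comp (measurable_subtreeConfig (hΔ i (Finset.mem_range.1 hi)))

end Configuration

section Branching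

variable {ρ : Measure (ℕ × ℕ)} [IsProbabilityMeasure ρ] {G : (List ℕ → ℕ × ℕ) → ℝ}

theorem map_subtreeConfig (i : ℕ) : (gwMeasure ρ).map (subtreeConfig i) = gwMeasure ρ :=
  Measure.infinitePi_map_comp_of_injective ρ (List.append_left_injective [i])

theorem measureReal_root_eq (p : ℕ × ℕ) : (gwMeasure ρ).real {x | x [] = p} = ρ.real {p} := by
  have hmap : (gwMeasure ρ).map (fun x => x []) = ρ := Measure.infinitePi_map_eval _ []
  calc (gwMeasure ρ).real {x | x [] = p}
      = ((gwMeasure ρ).map (fun x => x [])).real {p} := by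
        rw [map_measureReal_apply (measurable_pi_apply []) (measurableSet_singleton p)]
        rfl
    _ = ρ.real {p} := by rw [hmap]

theorem integral_comp_subtreeConfig (hG : Measurable G) (i : ℕ) :
    ∫ x, G (subtreeConfig i x) ∂gwMeasure ρ = ∫ x, G x ∂gwMeasure ρ := by
  have hi : Measurable (subtreeConfig i) :=
    (measurable_subtreeConfig (Δ := Set.univ) fun _ => trivial).mono cylinderEvents_le_pi le_rfl
  rw [← integral_map hi.aemeasurable hG.aestronglyMeasurable, map_subtreeConfig]

theorem integral_prod_subtreeConfig (hG : Measurable G) (k : ℕ) :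
    ∫ x, ∏ i ∈ Finset.range k, G (subtreeConfig i x) ∂gwMeasure ρ =
      (∫ x, G x ∂gwMeasure ρ) ^ k := by
  induction k with
  | zero => simp
  | succ k ih =>
    have hS := measurable_prod_subtreeConfig hG (Δ := {v | ∃ i < k, ∃ u, u ++ [i] = v})
      fun i hi u => ⟨i, hi, u, rfl⟩
    have hT := hG.comp (measurable_subtreeConfig (Δ := {v | ∃ u, u ++ [k] = v})
      fun u => ⟨u, rfl⟩)
    have hindep : IndepFun (fun x => ∏ i ∈ Finset.range k, G (subtreeConfig i x))
        (fun x => G (subtreeConfig k x)) (gwMeasure ρ) := by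
      rw [IndepFun_iff_Indep]
      refine indep_of_indep_of_le (indep_cylinderEvents_infinitePi _ ?_)
        (measurable_iff_comap_le.1 hS) (measurable_iff_comap_le.1 hT)
      refine Set.disjoint_left.2 ?_
      rintro _ ⟨i, hi, u, rfl⟩ ⟨u', h⟩
      exact hi.ne' (List.append_singleton_inj.1 h).2
    simp_rw [Finset.prod_range_succ]
    rw [hindep.integral_fun_mul_eq_mul_integral
        (hS.mono cylinderEvents_le_pi le_rfl).aestronglyMeasurable
        (hT.mono cylinderEvents_le_pi le_rfl).aestronglyMeasurable,
      ih, integral_comp_subtreeConfig hG, pow_succ]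

theorem setIntegral_root_prod_subtreeConfig (hG : Measurable G) (p : ℕ × ℕ) (k : ℕ) :
    ∫ x in {x | x [] = p}, ∏ i ∈ Finset.range k, G (subtreeConfig i x) ∂gwMeasure ρ =
      ρ.real {p} * (∫ x, G x ∂gwMeasure ρ) ^ k := by
  have hprod := measurable_prod_subtreeConfig hG (Δ := {v | v ≠ []}) (k := k) fun _ _ _ => by simp
  have hindep : Indep (cylinderEvents {[]})
      (MeasurableSpace.comap (fun x => ∏ i ∈ Finset.range k, G (subtreeConfig i x)) inferInstance)
      (gwMeasure ρ) :=
    indep_of_indep_of_le_right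
      (indep_cylinderEvents_infinitePi _ (S := {[]}) (T := {v | v ≠ []})
        (Set.disjoint_singleton_left.2 fun h => h rfl))
      (measurable_iff_comap_le.1 hprod)
  have hroot : MeasurableSet[cylinderEvents {[]}] {x : List ℕ → ℕ × ℕ | x [] = p} :=
    measurable_cylinderEvent_apply (X := fun _ => ℕ × ℕ) (Set.mem_singleton [])
      (measurableSet_singleton p)
  rw [hindep.setIntegral_eq_mul (f := fun y => y) cylinderEvents_le_pi
      (hprod.mono cylinderEvents_le_pi le_rfl).aemeasurable hroot aestronglyMeasurable_id,
    measureReal_root_eq, integral_prod_subtreeConfig hG]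

theorem integral_mul_prod_subtreeConfig (hG : Measurable G) (hG1 : ∀ x, |G x| ≤ 1)
    {h : ℕ × ℕ → ℝ} {C : ℝ} (hh : ∀ p, |h p| ≤ C) :
    ∫ x, h (x []) * ∏ i ∈ Finset.range (x []).1, G (subtreeConfig i x) ∂gwMeasure ρ =
      ∫ p, h p * (∫ x, G x ∂gwMeasure ρ) ^ p.1 ∂ρ := by
  set c := ∫ x, G x ∂gwMeasure ρ
  have hroot : Measurable fun x : List ℕ → ℕ × ℕ => x [] := measurable_pi_apply []
  have hmeas : Measurable fun x => h (x []) * ∏ i ∈ Finset.range (x []).1, G (subtreeConfig i x) :=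
    (measurable_from_prod_countable_right
      (f := fun q : (ℕ × ℕ) × (List ℕ → ℕ × ℕ) =>
        h q.1 * ∏ i ∈ Finset.range q.1.1, G (subtreeConfig i q.2))
      fun q => show Measurable fun x => h q * ∏ i ∈ Finset.range q.1, G (subtreeConfig i x) from
        measurable_const.mul <| (measurable_prod_subtreeConfig hG (Δ := Set.univ)
          fun _ _ _ => trivial).mono cylinderEvents_le_pi le_rfl).comp
      (hroot.prodMk measurable_id)
  have hint : Integrable (fun x => h (x []) * ∏ i ∈ Finset.range (x []).1, G (subtreeConfig i x))
      (gwMeasure ρ) := by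
    refine .of_bound hmeas.aestronglyMeasurable C (Filter.Eventually.of_forall fun x => ?_)
    rw [Real.norm_eq_abs, abs_mul, Finset.abs_prod]
    exact (mul_le_of_le_one_right (abs_nonneg _)
      (Finset.prod_le_one (fun _ _ => abs_nonneg _) fun _ _ => hG1 _)).trans (hh _)
  have hint' : Integrable (fun p => h p * c ^ p.1) ρ := by
    refine .of_bound Measurable.of_discrete.aestronglyMeasurable C
      (Filter.Eventually.of_forall fun p => ?_)
    rw [Real.norm_eq_abs, abs_mul, abs_pow]
    exact (mul_le_of_le_one_right (abs_nonneg _)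
      (pow_le_one₀ (abs_nonneg _) (abs_integral_le_one hG1))).trans (hh _)
  rw [integral_eq_tsum_setIntegral_fiber hroot hint, integral_countable hint']
  refine tsum_congr fun p => ?_
  rw [setIntegral_congr_fun (s := {x | x [] = p}) (hroot (measurableSet_singleton p))
      (g := fun x => h p * ∏ i ∈ Finset.range p.1, G (subtreeConfig i x))
      fun x (hx : x [] = p) => by rw [hx],
    integral_const_mul, setIntegral_root_prod_subtreeConfig hG, smul_eq_mul]
  ring

end Branching

section Extinction

variable {ρ : Measure (ℕ × ℕ)} [IsProbabilityMeasure ρ]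

theorem measureReal_heightLt_succ (n : ℕ) :
    (gwMeasure ρ).real (heightLt (n + 1)) = ∫ p, (gwMeasure ρ).real (heightLt n) ^ p.1 ∂ρ := by
  have hind : Measurable ((heightLt n).indicator (1 : (List ℕ → ℕ × ℕ) → ℝ)) :=
    measurable_one.indicator (measurableSet_heightLt n)
  have := integral_mul_prod_subtreeConfig (ρ := ρ) hind
    (fun x => by by_cases hx : x ∈ heightLt n <;> simp [hx]) (h := fun _ => 1) (C := 1)
    (fun _ => by simp)
  simp only [one_mul, ← indicator_heightLt_succ,
    integral_indicator_one (measurableSet_heightLt _)] at this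
  exact this

theorem add_mul_sq_le_integral_pow (hmean : ∫ p, (p.1 : ℝ) ∂ρ = 1) {s : ℝ} (h0 : 0 ≤ s)
    (h1 : s ≤ 1) : s + ρ.real {p | 2 ≤ p.1} * (1 - s) ^ 2 ≤ ∫ p, s ^ p.1 ∂ρ := by
  have hint : Integrable (fun p : ℕ × ℕ => (p.1 : ℝ)) ρ := by
    by_contra h
    simp [integral_undef h] at hmean
  have hS : MeasurableSet {p : ℕ × ℕ | 2 ≤ p.1} := .of_discrete
  have hbound : ∀ p : ℕ × ℕ,
      1 + p.1 * (s - 1) + {p : ℕ × ℕ | 2 ≤ p.1}.indicator (fun _ => (1 - s) ^ 2) p ≤ s ^ p.1 := by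
    intro p
    by_cases hk : 2 ≤ p.1
    · rw [Set.indicator_of_mem (s := {p : ℕ × ℕ | 2 ≤ p.1}) hk]
      exact one_add_mul_sub_one_add_sq_le_pow h0 hk
    · rw [Set.indicator_of_notMem (s := {p : ℕ × ℕ | 2 ≤ p.1}) hk, add_zero]
      interval_cases p.1 <;> simp
  have hint_bound := ((integrable_const 1).fun_add (hint.mul_const (s - 1))).fun_add
    ((integrable_const ((1 - s) ^ 2)).indicator hS)
  calc s + ρ.real {p | 2 ≤ p.1} * (1 - s) ^ 2
      = ∫ p, (1 + p.1 * (s - 1) + {p : ℕ × ℕ | 2 ≤ p.1}.indicator (fun _ => (1 - s) ^ 2) p) ∂ρ := by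
        rw [integral_add ((integrable_const 1).fun_add (hint.mul_const _))
            ((integrable_const _).indicator hS),
          integral_add (integrable_const 1) (hint.mul_const _), integral_const, integral_mul_const,
          hmean, integral_indicator_const _ hS]
        simp only [probReal_univ, smul_eq_mul]
        ring
    _ ≤ ∫ p, s ^ p.1 ∂ρ := by
        refine integral_mono hint_bound (.of_bound Measurable.of_discrete.aestronglyMeasurable 1
          (Filter.Eventually.of_forall fun p => ?_)) hbound
        rw [Real.norm_eq_abs, abs_of_nonneg (pow_nonneg h0 _)]
        exact pow_le_one₀ h0 h1

theorem measureReal_two_le_pos (hmean : ∫ p, (p.1 : ℝ) ∂ρ = 1)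
    (hnondeg : ρ {p | p.1 = 1} < 1) : 0 < ρ.real {p | 2 ≤ p.1} := by
  refine lt_of_le_of_ne measureReal_nonneg fun h => ?_
  have hle : ∀ᵐ p ∂ρ, (p.1 : ℝ) ≤ {p : ℕ × ℕ | p.1 = 1}.indicator 1 p := by
    filter_upwards [measure_eq_zero_iff_ae_notMem.1 ((measureReal_eq_zero_iff).1 h.symm)]
      with p hp
    simp only [not_le] at hp
    interval_cases h : p.1 <;> simp [h]
  have hmono := integral_mono_of_nonneg (ae_of_all _ fun p => Nat.cast_nonneg _)
    ((integrable_const 1).indicator .of_discrete) hle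
  rw [hmean, integral_indicator_one .of_discrete] at hmono
  have hlt : ρ.real {p | p.1 = 1} < 1 := by
    rw [measureReal_def]
    exact ENNReal.toReal_lt_of_lt_ofReal (by simpa using hnondeg)
  linarith

theorem ae_finite_setOf_alive (hmean : ∫ p, (p.1 : ℝ) ∂ρ = 1) (hnondeg : ρ {p | p.1 = 1} < 1) :
    ∀ᵐ x ∂gwMeasure ρ, {v | Alive offspring v x}.Finite := by
  have hU : MeasurableSet (⋃ n, heightLt n) := .iUnion measurableSet_heightLt
  have hone : 1 ≤ (gwMeasure ρ).real (⋃ n, heightLt n) :=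
    one_le_of_forall_le_of_add_mul_sq_le (measureReal_two_le_pos hmean hnondeg)
      measureReal_nonneg (fun n => measureReal_mono (Set.subset_iUnion _ n)) fun n => by
        rw [measureReal_heightLt_succ]
        exact add_mul_sq_le_integral_pow hmean measureReal_nonneg measureReal_le_one
  have hnull : gwMeasure ρ (⋃ n, heightLt n)ᶜ = 0 := by
    rw [← measureReal_eq_zero_iff]
    linarith [probReal_compl_eq_one_sub (μ := gwMeasure ρ) hU,
      measureReal_nonneg (μ := gwMeasure ρ) (s := (⋃ n, heightLt n)ᶜ)]
  filter_upwards [mem_ae_iff.2 hnull] with x hx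
  obtain ⟨n, hn⟩ := Set.mem_iUnion.1 hx
  exact finite_setOf_alive hn

theorem integral_pow_leafCount (hmean : ∫ p, (p.1 : ℝ) ∂ρ = 1) (hnondeg : ρ {p | p.1 = 1} < 1)
    {z : ℝ} (hz0 : 0 ≤ z) (hz1 : z ≤ 1) :
    ∫ x, z ^ leafCount offspring x ∂gwMeasure ρ =
      ρ.real {(0, 0)} * (z - 1) +
        ∫ p, (∫ x, z ^ leafCount offspring x ∂gwMeasure ρ) ^ p.1 * z ^ p.2 ∂ρ := by
  set c := ∫ x, z ^ leafCount offspring x ∂gwMeasure ρ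
  have hpow : ∀ n : ℕ, |z ^ n| ≤ 1 := fun n => by
    rw [abs_of_nonneg (pow_nonneg hz0 _)]
    exact pow_le_one₀ hz0 hz1
  have hbranch : c = ∫ p, z ^ leafWeight p * c ^ p.1 ∂ρ := by
    rw [← integral_mul_prod_subtreeConfig (measurable_pow_leafCount z) (fun _ => hpow _) (C := 1)
      fun _ => hpow _]
    refine integral_congr_ae ?_
    filter_upwards [ae_finite_setOf_alive hmean hnondeg] with x hx
    simp only [leafCount_eq_leafWeight_add_sum hx, pow_add, ← Finset.prod_pow_eq_pow_sum,
      leafCount_subtree_offspring]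
    rfl
  have hsplit : ∀ p : ℕ × ℕ, z ^ leafWeight p * c ^ p.1 =
      c ^ p.1 * z ^ p.2 + ({(0, 0)} : Set (ℕ × ℕ)).indicator (fun _ => z - 1) p := by
    intro p
    by_cases hp : p = (0, 0)
    · subst hp
      simp [leafWeight]
    · simp [leafWeight, hp, mul_comm]
  have hint : Integrable (fun p : ℕ × ℕ => c ^ p.1 * z ^ p.2) ρ := by
    refine .of_bound Measurable.of_discrete.aestronglyMeasurable 1
      (Filter.Eventually.of_forall fun p => ?_)
    rw [Real.norm_eq_abs, abs_mul, abs_pow]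
    exact mul_le_one₀ (pow_le_one₀ (abs_nonneg _) (abs_integral_le_one fun _ => hpow _))
      (abs_nonneg _) (hpow _)
  conv_lhs => rw [hbranch]
  rw [integral_congr_ae (Filter.Eventually.of_forall hsplit),
    integral_add hint ((integrable_const _).indicator (measurableSet_singleton _)),
    integral_indicator_const _ (measurableSet_singleton _), smul_eq_mul, add_comm]

end Extinction

end GaltonWatson

theorem leaf_pgf_equation_general {Ω : Type*} [MeasurableSpace Ω]
    (μ : Measure Ω) [IsProbabilityMeasure μ]
    (X : List ℕ → Ω → ℕ × ℕ)
    (hmeas : ∀ v, Measurable (X v))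
    (hindep : iIndepFun X μ)
    (hident : ∀ v, μ.map (X v) = μ.map (X []))
    (hmean : ∫ ω, ((X [] ω).1 : ℝ) ∂μ = 1)
    (hnondeg : μ {ω | (X [] ω).1 = 1} < 1) :
    ∀ z : ℝ, 0 ≤ z → z ≤ 1 →
      (∫ ω, z ^ leafCount X ω ∂μ) =
        (μ {ω | X [] ω = (0, 0)}).toReal * (z - 1) +
          ∫ ω, (∫ ω', z ^ leafCount X ω' ∂μ) ^ (X [] ω).1 * z ^ (X [] ω).2 ∂μ := by
  intro z hz0 hz1
  have hroot : AEMeasurable (X []) μ := (hmeas []).aemeasurable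
  have : IsProbabilityMeasure (μ.map (X [])) := Measure.isProbabilityMeasure_map hroot
  have hlaw : μ.map (fun ω v => X v ω) = GaltonWatson.gwMeasure (μ.map (X [])) := by
    rw [hindep.map_fun_eq_infinitePi_map hmeas]
    simp_rw [hident]
  have hZ : ∫ ω, z ^ leafCount X ω ∂μ =
      ∫ x, z ^ leafCount GaltonWatson.offspring x ∂GaltonWatson.gwMeasure (μ.map (X [])) := by
    rw [← hlaw, integral_map (measurable_pi_lambda _ hmeas).aemeasurable
      (GaltonWatson.measurable_pow_leafCount z).aestronglyMeasurable]
    exact integral_congr_ae (Filter.Eventually.of_forall fun ω =>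
      congrArg (z ^ ·) (GaltonWatson.leafCount_congr fun _ => rfl))
  rw [hZ]
  refine (GaltonWatson.integral_pow_leafCount
    (by rwa [integral_map hroot Measurable.of_discrete.aestronglyMeasurable])
    (by rwa [Measure.map_apply (hmeas []) .of_discrete]) hz0 hz1).trans ?_
  rw [integral_map hroot Measurable.of_discrete.aestronglyMeasurable,
    map_measureReal_apply (hmeas []) (measurableSet_singleton _)]
  rfl

/-- The probability generating function of the number of leaves `Z` of a critical
sesqui-type Galton–Watson tree satisfies
`Z(z) = P((ξ,ζ) = (0,0))·(z - 1) + f(Z(z), z)` for `z ∈ [0,1]`, where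
`f(z, w) = E[z^ξ w^ζ]`. -/
theorem leaf_pgf_equation {Ω : Type*} [MeasurableSpace Ω]
    (μ : Measure Ω) [IsProbabilityMeasure μ]
    (X : List ℕ → Ω → ℕ × ℕ)
    (hmeas : ∀ v, Measurable (X v))
    (hindep : iIndepFun X μ)
    (hident : ∀ v, μ.map (X v) = μ.map (X []))
    (hmean : ∫ ω, ((X [] ω).1 : ℝ) ∂μ = 1)
    (hnondeg : μ {ω | (X [] ω).1 = 1} < 1)
    (hexp : ∃ ε : ℝ, 0 < ε ∧
      Integrable (fun ω => (1 + ε) ^ ((X [] ω).1 + (X [] ω).2)) μ) :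
    ∀ z : ℝ, 0 ≤ z → z ≤ 1 →
      (∫ ω, z ^ leafCount X ω ∂μ) =
        (μ {ω | X [] ω = (0, 0)}).toReal * (z - 1) +
          ∫ ω, (∫ ω', z ^ leafCount X ω' ∂μ) ^ (X [] ω).1 * z ^ (X [] ω).2 ∂μ :=
  leaf_pgf_equation_general μ X hmeas hindep hident hmean hnondeg
end
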